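/- Let X be either (a) a locally compact paracompact Hausdorff space or (b) a countably compact space, and let Y be a disconnected metrizable space. Then K₁(X,Y) ∩ Σ^f(X,Y) = B₁(X,Y) holds if and only if X is strongly zero-dimensional. -/

import Mathlib

open Set Filter Topology

def IsZeroSet {X : Type*} [TopologicalSpace X] (A : Set X) : Prop :=
  ∃ f : X → ℝ, Continuous f ∧ A = f ⁻¹' {0}

def IsCozeroSet {X : Type*} [TopologicalSpace X] (A : Set X) : Prop := IsZeroSet Aᶜ

def IsDiscreteFamily {X : Type*} [TopologicalSpace X] {ι : Type*} (U : ι → Set X) : Prop :=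
  ∀ x : X, ∃ V ∈ 𝓝 x, {i | (U i ∩ V).Nonempty}.Subsingleton

def IsSFDFamily {X : Type*} [TopologicalSpace X] {ι : Type*} (A : ι → Set X) : Prop :=
  ∃ U : ι → Set X, IsDiscreteFamily U ∧ (∀ i, IsCozeroSet (U i)) ∧ ∀ i, closure (A i) ⊆ U i

def IsSFDSetFamily {X : Type*} [TopologicalSpace X] (𝓐 : Set (Set X)) : Prop :=
  IsSFDFamily (fun A : 𝓐 => (A : Set X))

def IsBaseFor {X Y : Type*} [TopologicalSpace X] [TopologicalSpace Y]
    (𝓑 : Set (Set X)) (f : X → Y) : Prop :=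
  ∀ V : Set Y, IsOpen V → ∃ 𝓢 ⊆ 𝓑, f ⁻¹' V = ⋃₀ 𝓢

def FunctionallyFSigma {X : Type*} [TopologicalSpace X] (A : Set X) : Prop :=
  ∃ F : ℕ → Set X, (∀ n, IsZeroSet (F n)) ∧ A = ⋃ n, F n

def MemK1 {X Y : Type*} [TopologicalSpace X] [TopologicalSpace Y] (f : X → Y) : Prop :=
  ∀ V : Set Y, IsOpen V → FunctionallyFSigma (f ⁻¹' V)

def MemB1 {X Y : Type*} [TopologicalSpace X] [TopologicalSpace Y] (f : X → Y) : Prop :=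
  ∃ g : ℕ → X → Y, (∀ n, Continuous (g n)) ∧
    ∀ x, Tendsto (fun n => g n x) atTop (𝓝 (f x))

def MemSigmaF {X Y : Type*} [TopologicalSpace X] [TopologicalSpace Y] (f : X → Y) : Prop :=
  ∃ 𝓑 : ℕ → Set (Set X), (∀ n, IsSFDSetFamily (𝓑 n)) ∧ IsBaseFor (⋃ n, 𝓑 n) f

def MemSigmaF0 {X Y : Type*} [TopologicalSpace X] [TopologicalSpace Y] (f : X → Y) : Prop :=
  ∃ 𝓑 : ℕ → Set (Set X), (∀ n, IsSFDSetFamily (𝓑 n)) ∧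
    (∀ n, ∀ A ∈ 𝓑 n, IsZeroSet A) ∧ IsBaseFor (⋃ n, 𝓑 n) f

def CompletelySeparatedSets {X : Type*} [TopologicalSpace X] (A B : Set X) : Prop :=
  ∃ h : X → ℝ, Continuous h ∧ (∀ x, h x ∈ Icc (0:ℝ) 1) ∧
    (∀ x ∈ A, h x = 0) ∧ ∀ x ∈ B, h x = 1

def StronglyZeroDimensional (X : Type*) [TopologicalSpace X] : Prop :=
  ∀ A B : Set X, CompletelySeparatedSets A B → ∃ U : Set X, IsClopen U ∧ A ⊆ U ∧ U ⊆ Bᶜ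

def IsCSet {X : Type*} [TopologicalSpace X] (A : Set X) : Prop :=
  ∃ U : ℕ → Set X, (∀ n, IsClopen (U n)) ∧ A = ⋂ n, U n

def IsCSigmaSet {X : Type*} [TopologicalSpace X] (A : Set X) : Prop :=
  ∃ C : ℕ → Set X, (∀ n, IsCSet (C n)) ∧ A = ⋃ n, C n

def AlmostStronglyZeroDimensional (X : Type*) [TopologicalSpace X] : Prop :=
  ∀ A : Set X, IsZeroSet A → IsCSigmaSet A

def CountablyCompactIn {X : Type*} [TopologicalSpace X] (F : Set X) : Prop :=
  ∀ U : ℕ → Set X, (∀ n, IsOpen (U n)) → F ⊆ ⋃ n, U n →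
    ∃ s : Finset ℕ, F ⊆ ⋃ n ∈ s, U n

/-!
Necessity. For a zero set `Z`, the map taking a value `u` on `Z` and a value `v` off `Z`, with `u`
and `v` in different pieces of a clopen partition of `Y`, lies in `K₁ ∩ Σ^f`. Writing it as a
pointwise limit of continuous maps exhibits `Z` as a countable union of countable intersections of
clopen sets. Under countable compactness, finitely many of these clopen sets already separate two
disjoint zero sets. In the locally compact case, this makes `X` totally disconnected, so it has a
base of compact clopen sets, and paracompactness yields a locally finite clopen refinement of any
open cover, hence clopen separations of disjoint closed sets.

Sufficiency. A pointwise limit of continuous maps into a metric space lies in `K₁`, and in `Σ^f`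
by pulling back a σ-uniformly separated base of `Y`. Conversely, for `f ∈ K₁ ∩ Σ^f` and each `k`,
`X` has a σ-strongly functionally discrete cover by zero sets on each of which `f` varies by less
than `2⁻ᵏ`. Strong zero-dimensionality approximates each zero set by clopen sets shrinking to it,
which gives locally constant maps converging pointwise to a `2⁻ᵏ`-approximation of `f`. A diagonal
choice along levels that stay coherent produces continuous maps converging to `f`.
-/

lemma Filter.eventually_atTop_iff_exists_forall_add {p : ℕ → Prop} :
    (∀ᶠ n in atTop, p n) ↔ ∃ N, ∀ n, p (N + n) := by
  refine eventually_atTop.trans ⟨fun ⟨N, hN⟩ => ⟨N, fun n => hN _ (Nat.le_add_right N n)⟩,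
    fun ⟨N, hN⟩ => ⟨N, fun n hn => ?_⟩⟩
  simpa [Nat.add_sub_cancel' hn] using hN (n - N)

lemma Nat.findGreatest_congr {P Q : ℕ → Prop} [DecidablePred P] [DecidablePred Q] {n : ℕ}
    (h : ∀ k ≤ n, (P k ↔ Q k)) : Nat.findGreatest P n = Nat.findGreatest Q n := by
  induction n with
  | zero => simp
  | succ n ih => simp only [Nat.findGreatest_succ, h (n + 1) le_rfl, ih fun k hk => h k (by omega)]

section ZeroSets

variable {X Y : Type*} [TopologicalSpace X] [TopologicalSpace Y]

lemma isZeroSet_empty : IsZeroSet (∅ : Set X) :=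
  ⟨fun _ => 1, continuous_const, by ext; simp⟩

lemma isZeroSet_univ : IsZeroSet (univ : Set X) :=
  ⟨fun _ => 0, continuous_const, by ext; simp⟩

lemma isCozeroSet_univ : IsCozeroSet (univ : Set X) := by
  simpa [IsCozeroSet] using isZeroSet_empty

lemma IsZeroSet.isClosed {A : Set X} (h : IsZeroSet A) : IsClosed A := by
  obtain ⟨f, hf, rfl⟩ := h
  exact isClosed_singleton.preimage hf

lemma IsZeroSet.preimage {A : Set Y} (hA : IsZeroSet A) {g : X → Y} (hg : Continuous g) :
    IsZeroSet (g ⁻¹' A) := by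
  obtain ⟨f, hf, rfl⟩ := hA
  exact ⟨f ∘ g, hf.comp hg, rfl⟩

lemma IsZeroSet.union {A B : Set X} (hA : IsZeroSet A) (hB : IsZeroSet B) :
    IsZeroSet (A ∪ B) := by
  obtain ⟨f, hf, rfl⟩ := hA
  obtain ⟨g, hg, rfl⟩ := hB
  exact ⟨f * g, hf.mul hg, by ext; simp [mul_eq_zero]⟩

lemma IsZeroSet.functionallyFSigma {A : Set X} (h : IsZeroSet A) : FunctionallyFSigma A :=
  ⟨fun _ => A, fun _ => h, (iUnion_const A).symm⟩

lemma IsClosed.isZeroSet [PerfectlyNormalSpace X] {F : Set X} (hF : IsClosed F) :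
    IsZeroSet F := by
  obtain ⟨f, hf, -⟩ := perfectlyNormalSpace_iff_forall_isClosed_preimage_zero.mp ‹_› F hF
  exact ⟨f, f.continuous, hf⟩

lemma IsClosed.isZeroSet_preimage [PerfectlyNormalSpace Y] {F : Set Y} (hF : IsClosed F)
    {g : X → Y} (hg : Continuous g) : IsZeroSet (g ⁻¹' F) :=
  hF.isZeroSet.preimage hg

lemma IsOpen.isCozeroSet_preimage [PerfectlyNormalSpace Y] {O : Set Y} (hO : IsOpen O)
    {g : X → Y} (hg : Continuous g) : IsCozeroSet (g ⁻¹' O) := by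
  rw [IsCozeroSet, ← preimage_compl]
  exact hO.isClosed_compl.isZeroSet_preimage hg

lemma IsZeroSet.inter {A B : Set X} (hA : IsZeroSet A) (hB : IsZeroSet B) :
    IsZeroSet (A ∩ B) := by
  obtain ⟨f, hf, rfl⟩ := hA
  obtain ⟨g, hg, rfl⟩ := hB
  convert (isClosed_singleton (x := (0 : ℝ × ℝ))).isZeroSet_preimage (hf.prodMk hg)
  ext; simp [Prod.ext_iff]

lemma isZeroSet_iInter {Z : ℕ → Set X} (h : ∀ n, IsZeroSet (Z n)) : IsZeroSet (⋂ n, Z n) := by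
  choose f hf hZ using h
  convert (isClosed_singleton (x := (0 : ℕ → ℝ))).isZeroSet_preimage (continuous_pi hf)
  ext; simp [hZ, funext_iff]

lemma IsCozeroSet.inter {A B : Set X} (hA : IsCozeroSet A) (hB : IsCozeroSet B) :
    IsCozeroSet (A ∩ B) := by
  rw [IsCozeroSet, compl_inter]
  exact hA.union hB

lemma IsCozeroSet.functionallyFSigma {G : Set X} (hG : IsCozeroSet G) : FunctionallyFSigma G := by
  obtain ⟨ψ, hψ, hG⟩ := hG
  obtain ⟨U, hU, hUeq⟩ := isGδ_iff_eq_iInter_nat.mp (isClosed_singleton (x := (0 : ℝ))).isGδ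
  refine ⟨fun n => ψ ⁻¹' (U n)ᶜ, fun n => (hU n).isClosed_compl.isZeroSet_preimage hψ, ?_⟩
  rw [← preimage_iUnion, ← compl_iInter, ← hUeq, preimage_compl, ← hG, compl_compl]

lemma FunctionallyFSigma.iUnion {A : ℕ → Set X} (h : ∀ n, FunctionallyFSigma (A n)) :
    FunctionallyFSigma (⋃ n, A n) := by
  choose F hF hA using h
  refine ⟨fun p => F p.unpair.1 p.unpair.2, fun p => hF _ _, ?_⟩
  rw [Set.iUnion_unpair]
  exact iUnion_congr hA

lemma completelySeparatedSets_of_isZeroSet {A B : Set X} (hA : IsZeroSet A) (hB : IsZeroSet B)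
    (hAB : Disjoint A B) : CompletelySeparatedSets A B := by
  obtain ⟨f, hf, rfl⟩ := hA
  obtain ⟨g, hg, rfl⟩ := hB
  have hpos : ∀ x, 0 < |f x| + |g x| := fun x => by
    by_contra! h
    have hfx : f x = 0 := abs_nonpos_iff.mp (by linarith [abs_nonneg (g x)])
    have hgx : g x = 0 := abs_nonpos_iff.mp (by linarith [abs_nonneg (f x)])
    exact hAB.ne_of_mem (a := x) hfx hgx rfl
  refine ⟨fun x => |f x| / (|f x| + |g x|), hf.abs.div (hf.abs.add hg.abs) fun x => (hpos x).ne',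
    fun x => ⟨by positivity, (div_le_one (hpos x)).mpr (le_add_of_nonneg_right (abs_nonneg _))⟩,
    fun x hx => by simp_all, fun x hx => ?_⟩
  simp only [mem_preimage, mem_singleton_iff] at hx
  simpa [hx] using (hpos x).ne'

end ZeroSets

section DiscreteFamilies

variable {X Y ι : Type*} [TopologicalSpace X] [TopologicalSpace Y]

lemma IsDiscreteFamily.mono {U V : ι → Set X} (h : IsDiscreteFamily U) (hVU : ∀ i, V i ⊆ U i) :
    IsDiscreteFamily V := fun x =>
  let ⟨W, hW, hsub⟩ := h x
  ⟨W, hW, hsub.anti fun i ⟨y, hy, hyW⟩ => ⟨y, hVU i hy, hyW⟩⟩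

lemma IsDiscreteFamily.eq_of_mem {U : ι → Set X} (h : IsDiscreteFamily U) {i j : ι} {x : X}
    (hi : x ∈ U i) (hj : x ∈ U j) : i = j :=
  let ⟨_, hW, hsub⟩ := h x
  hsub ⟨x, hi, mem_of_mem_nhds hW⟩ ⟨x, hj, mem_of_mem_nhds hW⟩

lemma IsDiscreteFamily.locallyFinite {U : ι → Set X} (h : IsDiscreteFamily U) :
    LocallyFinite U := fun x =>
  let ⟨W, hW, hsub⟩ := h x
  ⟨W, hW, hsub.finite⟩

lemma IsDiscreteFamily.preimage {U : ι → Set Y} (h : IsDiscreteFamily U) {g : X → Y}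
    (hg : Continuous g) : IsDiscreteFamily fun i => g ⁻¹' U i := fun x =>
  let ⟨W, hW, hsub⟩ := h (g x)
  ⟨g ⁻¹' W, hg.continuousAt.preimage_mem_nhds hW, hsub.anti fun _ ⟨y, hy, hyW⟩ => ⟨g y, hy, hyW⟩⟩

lemma isSFDSetFamily_of_subsingleton {𝓐 : Set (Set X)} (h : 𝓐.Subsingleton) :
    IsSFDSetFamily 𝓐 :=
  ⟨fun _ => univ, fun _ => ⟨univ, univ_mem, fun B _ C _ => Subtype.ext (h B.2 C.2)⟩,
    fun _ => isCozeroSet_univ, fun _ => subset_univ _⟩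

lemma IsSFDFamily.isSFDSetFamily_range {A : ι → Set X} (h : IsSFDFamily A) :
    IsSFDSetFamily (range A) := by
  obtain ⟨U, hU, hcoz, hcl⟩ := h
  choose idx hidx using fun B : range A => B.2
  have hinj : Function.Injective idx := fun B C hBC => Subtype.ext (by rw [← hidx B, ← hidx C, hBC])
  refine ⟨fun B => U (idx B), fun x => ?_, fun B => hcoz _, fun B => ?_⟩
  · obtain ⟨W, hW, hsub⟩ := hU x
    exact ⟨W, hW, fun B hB C hC => hinj (hsub hB hC)⟩
  · simpa only [hidx] using hcl (idx B)

lemma IsSFDSetFamily.exists_expansion {𝓐 : Set (Set X)} (h : IsSFDSetFamily 𝓐) :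
    ∃ E : Set X → Set X, IsDiscreteFamily E ∧ (∀ B, IsCozeroSet (E B)) ∧ ∀ B ∈ 𝓐, B ⊆ E B := by
  obtain ⟨U, hU, hcoz, hcl⟩ := h
  refine ⟨fun B => ⋃ hB : B ∈ 𝓐, U ⟨B, hB⟩, fun x => ?_, fun B => ?_,
    fun B hB => subset_closure.trans ((hcl ⟨B, hB⟩).trans (subset_iUnion_of_subset hB subset_rfl))⟩
  · obtain ⟨W, hW, hsub⟩ := hU x
    refine ⟨W, hW, fun B ⟨y, hy, hyW⟩ C ⟨z, hz, hzW⟩ => ?_⟩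
    obtain ⟨hB, hy⟩ := mem_iUnion.mp hy
    obtain ⟨hC, hz⟩ := mem_iUnion.mp hz
    exact congrArg Subtype.val (hsub (x := ⟨B, hB⟩) ⟨y, hy, hyW⟩ ⟨z, hz, hzW⟩)
  · by_cases hB : B ∈ 𝓐
    · simpa [hB] using hcoz ⟨B, hB⟩
    · simpa [hB, IsCozeroSet] using isZeroSet_univ

lemma memSigmaF_of_countable {κ : Type*} [Countable κ] [Nonempty κ] {f : X → Y}
    (𝓑 : κ → Set (Set X)) (h𝓑 : ∀ k, IsSFDSetFamily (𝓑 k)) (hbase : IsBaseFor (⋃ k, 𝓑 k) f) :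
    MemSigmaF f := by
  obtain ⟨e, he⟩ := exists_surjective_nat κ
  exact ⟨fun n => 𝓑 (e n), fun n => h𝓑 _, by rwa [he.iUnion_comp 𝓑]⟩

end DiscreteFamilies

section StronglyZeroDimensional

variable {X : Type*} [TopologicalSpace X]

lemma StronglyZeroDimensional.exists_isClopen_between (hX : StronglyZeroDimensional X)
    {Z G : Set X} (hZ : IsZeroSet Z) (hG : IsCozeroSet G) (hZG : Z ⊆ G) :
    ∃ W, IsClopen W ∧ Z ⊆ W ∧ W ⊆ G := by
  obtain ⟨W, hW, hZW, hWG⟩ :=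
    hX Z Gᶜ (completelySeparatedSets_of_isZeroSet hZ hG (disjoint_compl_right_iff_subset.mpr hZG))
  exact ⟨W, hW, hZW, by simpa using hWG⟩

lemma StronglyZeroDimensional.exists_isClopen_seq (hX : StronglyZeroDimensional X)
    {Z G : Set X} (hZ : IsZeroSet Z) (hG : IsCozeroSet G) (hZG : Z ⊆ G) :
    ∃ W : ℕ → Set X, (∀ n, IsClopen (W n)) ∧ (∀ n, Z ⊆ W n) ∧ (∀ n, W n ⊆ G) ∧
      ∀ x ∉ Z, ∀ᶠ n in atTop, x ∉ W n := by
  obtain ⟨ψ, hψ, rfl⟩ := hZ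
  have hGn (n : ℕ) : IsCozeroSet (G ∩ (fun x => |ψ x|) ⁻¹' Iio (1 / (n + 1))) :=
    hG.inter (isOpen_Iio.isCozeroSet_preimage hψ.abs)
  choose W hW hZW hWG using fun n : ℕ => hX.exists_isClopen_between ⟨ψ, hψ, rfl⟩ (hGn n)
    (subset_inter hZG fun x hx => by simp_all; positivity)
  refine ⟨W, hW, hZW, fun n => (hWG n).trans inter_subset_left, fun x hx => ?_⟩
  have hpos : 0 < |ψ x| := abs_pos.mpr hx
  filter_upwards [tendsto_one_div_add_atTop_nhds_zero_nat.eventually (gt_mem_nhds hpos)]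
    with n hn hxW
  exact (hWG n hxW).2.out.not_gt hn

end StronglyZeroDimensional

section Necessity

variable {X Y : Type*} [TopologicalSpace X] [TopologicalSpace Y]

lemma MemB1.isCSigmaSet_preimage {f : X → Y} (hf : MemB1 f) {U : Set Y} (hU : IsClopen U) :
    IsCSigmaSet (f ⁻¹' U) := by
  obtain ⟨g, hg, hlim⟩ := hf
  refine ⟨fun N => ⋂ n, g (N + n) ⁻¹' U, fun N => ⟨_, fun n => hU.preimage (hg _), rfl⟩, ?_⟩
  ext x
  have hmem : f x ∈ U ↔ ∀ᶠ n in atTop, g n x ∈ U :=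
    ⟨(hlim x).eventually_mem ∘ hU.isOpen.mem_nhds, hU.isClosed.mem_of_tendsto (hlim x)⟩
  simp only [mem_preimage, mem_iUnion, mem_iInter]
  rw [hmem, eventually_atTop_iff_exists_forall_add]

lemma memK1_piecewise_const {Z : Set X} [DecidablePred (· ∈ Z)] (hZ : IsZeroSet Z) (u v : Y) :
    MemK1 (Z.piecewise (fun _ => u) (fun _ => v)) := by
  intro V _
  have hZc : FunctionallyFSigma Zᶜ := IsCozeroSet.functionallyFSigma (by simpa [IsCozeroSet])
  by_cases hu : u ∈ V <;> by_cases hv : v ∈ V <;>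
    simp [piecewise_preimage, hu, hv, Set.ite, ← compl_eq_univ_sdiff, hZ.functionallyFSigma, hZc,
      isZeroSet_univ.functionallyFSigma, isZeroSet_empty.functionallyFSigma]

lemma memSigmaF_of_finite_range {f : X → Y} (hf : (range f).Finite) : MemSigmaF f := by
  set 𝓒 : Set (Set X) := preimage f '' 𝒫 range f
  have hmem (V : Set Y) : f ⁻¹' V ∈ 𝓒 := ⟨V ∩ range f, inter_subset_right, preimage_inter_range⟩
  have : Countable 𝓒 := (hf.finite_subsets.image _).countable.to_subtype
  have : Nonempty 𝓒 := ⟨⟨_, hmem ∅⟩⟩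
  refine memSigmaF_of_countable (fun C : 𝓒 => {(C : Set X)})
    (fun _ => isSFDSetFamily_of_subsingleton subsingleton_singleton)
    fun V _ => ⟨{f ⁻¹' V}, ?_, (sUnion_singleton _).symm⟩
  exact singleton_subset_iff.mpr (mem_iUnion.mpr ⟨⟨_, hmem V⟩, rfl⟩)

lemma almostStronglyZeroDimensional_of_memB1 {U : Set Y} (hU : IsClopen U) {u v : Y} (hu : u ∈ U)
    (hv : v ∉ U) (H : ∀ f : X → Y, MemK1 f → MemSigmaF f → MemB1 f) :
    AlmostStronglyZeroDimensional X := by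
  classical
  intro Z hZ
  have hrange : (range (Z.piecewise (fun _ => u) (fun _ => v))).Finite :=
    (toFinite {u, v}).subset (range_subset_iff.mpr fun x => by by_cases hx : x ∈ Z <;> simp [hx])
  have hpre : Z.piecewise (fun _ => u) (fun _ => v) ⁻¹' U = Z := by
    ext x
    by_cases hx : x ∈ Z <;> simp [hx, hu, hv]
  simpa [hpre] using
    (H _ (memK1_piecewise_const hZ u v) (memSigmaF_of_finite_range hrange)).isCSigmaSet_preimage hU

lemma stronglyZeroDimensional_of_disjoint_isZeroSet
    (h : ∀ Z₀ Z₁ : Set X, IsZeroSet Z₀ → IsZeroSet Z₁ → Disjoint Z₀ Z₁ →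
      ∃ U, IsClopen U ∧ Z₀ ⊆ U ∧ Disjoint U Z₁) :
    StronglyZeroDimensional X := by
  rintro A B ⟨φ, hφ, -, hA, hB⟩
  obtain ⟨U, hU, hZU, hUZ⟩ := h (φ ⁻¹' {0}) (φ ⁻¹' {1}) ⟨φ, hφ, rfl⟩
    ⟨φ - 1, hφ.sub continuous_const, by ext; simp [sub_eq_zero]⟩
    ((disjoint_singleton.mpr zero_ne_one).preimage φ)
  exact ⟨U, hU, fun x hx => hZU (hA x hx), fun x hxU hxB => hUZ.ne_of_mem hxU (hB x hxB) rfl⟩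

lemma IsCSet.exists_isClopen_superset [CountablyCompactSpace X] {C F : Set X} (hC : IsCSet C)
    (hF : IsClosed F) (hCF : Disjoint C F) : ∃ V, IsClopen V ∧ C ⊆ V ∧ Disjoint V F := by
  obtain ⟨W, hW, rfl⟩ := hC
  have hcov : F ⊆ ⋃ n, (W n)ᶜ := by
    rw [← compl_iInter]
    exact hCF.symm.subset_compl_right
  obtain ⟨t, ht⟩ :=
    hF.isCountablyCompact.elim_finite_subcover (fun n => (hW n).isClosed.isOpen_compl) hcov
  refine ⟨⋂ n ∈ t, W n, isClopen_biInter_finset fun n _ => hW n,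
    fun x hx => mem_iInter₂.mpr fun n _ => mem_iInter.mp hx n, disjoint_left.mpr fun x hx hxF => ?_⟩
  obtain ⟨n, hn, hxn⟩ := mem_iUnion₂.mp (ht hxF)
  exact hxn (mem_iInter₂.mp hx n hn)

lemma AlmostStronglyZeroDimensional.stronglyZeroDimensional_of_countablyCompact
    [CountablyCompactSpace X] (ha : AlmostStronglyZeroDimensional X) :
    StronglyZeroDimensional X := by
  refine stronglyZeroDimensional_of_disjoint_isZeroSet fun Z₀ Z₁ hZ₀ hZ₁ hZ => ?_
  obtain ⟨C, hC, rfl⟩ := ha Z₀ hZ₀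
  choose V hV hCV hVZ using fun n =>
    (hC n).exists_isClopen_superset hZ₁.isClosed (hZ.mono_left (subset_iUnion C n))
  obtain ⟨t, ht⟩ := hZ₀.isClosed.isCountablyCompact.elim_finite_subcover (fun n => (hV n).isOpen)
    (iUnion_mono hCV)
  exact ⟨⋃ n ∈ t, V n, isClopen_biUnion_finset fun n _ => hV n, ht,
    disjoint_iUnion₂_left.mpr fun n _ => hVZ n⟩

lemma AlmostStronglyZeroDimensional.exists_isClopen_of_ne (ha : AlmostStronglyZeroDimensional X)
    {φ : X → ℝ} (hφ : Continuous φ) {x y : X} (hxy : φ x ≠ φ y) :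
    ∃ U, IsClopen U ∧ x ∈ U ∧ y ∉ U := by
  obtain ⟨C, hC, hZ⟩ := ha _ ⟨fun z => φ z - φ x, hφ.sub continuous_const, rfl⟩
  obtain ⟨n, hxn⟩ := mem_iUnion.mp (hZ ▸ (by simp : x ∈ (fun z => φ z - φ x) ⁻¹' {0}))
  obtain ⟨W, hW, hCW⟩ := hC n
  have hyn : y ∉ C n := fun hy => hxy (sub_eq_zero.mp (hZ ▸ mem_iUnion.mpr ⟨n, hy⟩ :)).symm
  rw [hCW, mem_iInter, not_forall] at hyn
  obtain ⟨k, hk⟩ := hyn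
  exact ⟨W k, hW k, mem_iInter.mp (hCW ▸ hxn) k, hk⟩

lemma AlmostStronglyZeroDimensional.totallySeparatedSpace [LocallyCompactSpace X] [T2Space X]
    (ha : AlmostStronglyZeroDimensional X) : TotallySeparatedSpace X := by
  refine totallySeparatedSpace_iff_exists_isClopen.mpr fun x y hxy => ?_
  obtain ⟨φ, hφx, hφy, -, -⟩ := exists_continuous_one_zero_of_isCompact isCompact_singleton
    isClosed_singleton (disjoint_singleton.mpr hxy)
  exact ha.exists_isClopen_of_ne φ.continuous (by simp [hφx rfl, hφy rfl])

lemma IsCompact.exists_isClopen_between [LocallyCompactSpace X] [T2Space X]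
    [TotallyDisconnectedSpace X] {K O : Set X} (hK : IsCompact K) (hO : IsOpen O) (hKO : K ⊆ O) :
    ∃ G, IsClopen G ∧ K ⊆ G ∧ G ⊆ O := by
  choose W hW hxW hWO using fun x : K =>
    loc_compact_Haus_tot_disc_of_zero_dim.exists_subset_of_mem_open (hKO x.2) hO
  obtain ⟨t, ht⟩ := hK.elim_finite_subcover W (fun x => (hW x).isOpen)
    fun x hx => mem_iUnion.mpr ⟨⟨x, hx⟩, hxW _⟩
  exact ⟨⋃ x ∈ t, W x, isClopen_biUnion_finset fun x _ => hW x, ht, iUnion₂_subset fun x _ => hWO x⟩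

lemma exists_isClopen_of_disjoint_of_paracompact [LocallyCompactSpace X] [ParacompactSpace X]
    [T2Space X] [TotallyDisconnectedSpace X] {s t : Set X} (hs : IsClosed s) (ht : IsClosed t)
    (hst : Disjoint s t) : ∃ U, IsClopen U ∧ s ⊆ U ∧ Disjoint U t := by
  have hK : ∀ x, ∃ K, IsCompact K ∧ x ∈ interior K ∧ (Disjoint K s ∨ Disjoint K t) := fun x => by
    by_cases hx : x ∈ s
    · obtain ⟨K, hK, hxK, hKt⟩ := exists_compact_subset ht.isOpen_compl (hst.notMem_of_mem_left hx)
      exact ⟨K, hK, hxK, Or.inr (subset_compl_iff_disjoint_right.mp hKt)⟩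
    · obtain ⟨K, hK, hxK, hKs⟩ := exists_compact_subset hs.isOpen_compl hx
      exact ⟨K, hK, hxK, Or.inl (subset_compl_iff_disjoint_right.mp hKs)⟩
  choose K hK hxK hKst using hK
  obtain ⟨v, hvo, hvcov, hvlf, hvK⟩ := precise_refinement (fun x => interior (K x))
    (fun _ => isOpen_interior) (eq_univ_of_forall fun x => mem_iUnion.mpr ⟨x, hxK x⟩)
  obtain ⟨w, hwcov, -, hwv⟩ := exists_subset_iUnion_closure_subset isClosed_univ hvo
    (fun x _ => hvlf.point_finite x) hvcov.ge
  choose G hG hwG hGv using fun x =>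
    ((hK x).of_isClosed_subset isClosed_closure ((hwv x).trans ((hvK x).trans interior_subset))
      ).exists_isClopen_between (hvo x) (hwv x)
  have hGK (x : X) : G x ⊆ K x := (hGv x).trans ((hvK x).trans interior_subset)
  have hGlf : LocallyFinite fun x : {x // Disjoint (K x) t} => G x :=
    (hvlf.subset hGv).comp_injective Subtype.val_injective
  refine ⟨⋃ x : {x // Disjoint (K x) t}, G x,
    ⟨hGlf.isClosed_iUnion fun x => (hG x).isClosed, isOpen_iUnion fun x => (hG x).isOpen⟩,
    fun y hy => ?_, disjoint_iUnion_left.mpr fun x => x.2.mono_left (hGK x)⟩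
  obtain ⟨x, hx⟩ := mem_iUnion.mp (hwcov (mem_univ y))
  have hyG : y ∈ G x := hwG x (subset_closure hx)
  have hKt : Disjoint (K x) t :=
    (hKst x).resolve_left fun hKs => hKs.ne_of_mem (hGK x hyG) hy rfl
  exact mem_iUnion.mpr ⟨⟨x, hKt⟩, hyG⟩

lemma AlmostStronglyZeroDimensional.stronglyZeroDimensional_of_paracompact [LocallyCompactSpace X]
    [ParacompactSpace X] [T2Space X] (ha : AlmostStronglyZeroDimensional X) :
    StronglyZeroDimensional X := by
  have := ha.totallySeparatedSpace
  exact stronglyZeroDimensional_of_disjoint_isZeroSet fun _ _ hZ₀ hZ₁ =>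
    exists_isClopen_of_disjoint_of_paracompact hZ₀.isClosed hZ₁.isClosed

end Necessity

section MetricTarget

variable {X Y ι : Type*} [TopologicalSpace X] [PseudoMetricSpace Y]

def UniformlySeparated (ρ : ℝ) (V : ι → Set Y) : Prop :=
  ∀ ⦃i j⦄, i ≠ j → ∀ y ∈ V i, ∀ z ∈ V j, ρ ≤ dist y z

lemma UniformlySeparated.isDiscreteFamily_thickening {ρ : ℝ} {V : ι → Set Y}
    (h : UniformlySeparated ρ V) (hρ : 0 < ρ) :
    IsDiscreteFamily fun i => Metric.thickening (ρ / 4) (V i) := by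
  intro x
  refine ⟨Metric.ball x (ρ / 4), Metric.ball_mem_nhds x (by positivity), ?_⟩
  rintro i ⟨y, hy, hyx⟩ j ⟨z, hz, hzx⟩
  by_contra hij
  obtain ⟨y', hy', hyy'⟩ := Metric.mem_thickening_iff.mp hy
  obtain ⟨z', hz', hzz'⟩ := Metric.mem_thickening_iff.mp hz
  have := h hij y' hy' z' hz'
  rw [Metric.mem_ball] at hyx hzx
  linarith [dist_triangle4 y' y z z', dist_triangle y x z, dist_comm y y', dist_comm x z]

/-- Unlike in Stone's theorem, local finiteness is not asked for, so the families need not be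
built recursively in `n`. -/
theorem exists_uniformlySeparated_refinement {U : ι → Set Y} (hU : ∀ i, IsOpen (U i))
    (hcov : ∀ y, ∃ i, y ∈ U i) :
    ∃ V : ℕ → ι → Set Y, (∀ n i, IsOpen (V n i)) ∧ (∀ n i, V n i ⊆ U i) ∧
      (∀ y, ∃ n i, y ∈ V n i) ∧ ∀ n, UniformlySeparated ((1 / 2) ^ n) (V n) := by
  obtain ⟨_, _⟩ := exists_wellFoundedLT ι
  let ind (y : Y) : ι := wellFounded_lt.min {i | y ∈ U i} (hcov y)
  have mem_ind (y : Y) : y ∈ U (ind y) := wellFounded_lt.min_mem _ (hcov y)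
  have not_lt_ind {y : Y} {i : ι} (hy : y ∈ U i) : ¬ i < ind y :=
    wellFounded_lt.not_lt_min {i | y ∈ U i} hy
  refine ⟨fun n i => ⋃ c ∈ {c | ind c = i ∧ Metric.ball c (3 * (1 / 2) ^ n) ⊆ U i},
    Metric.ball c ((1 / 2) ^ n), fun n i => isOpen_biUnion fun _ _ => Metric.isOpen_ball,
    fun n i y hy => ?_, fun y => ?_, fun n i j hij y hy z hz => ?_⟩
  · obtain ⟨c, ⟨-, hc⟩, hyc⟩ := mem_iUnion₂.mp hy
    exact hc (Metric.ball_subset_ball (by linarith [pow_pos (by norm_num : (0 : ℝ) < 1 / 2) n]) hyc)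
  · obtain ⟨ε, hε, hball⟩ := Metric.isOpen_iff.mp (hU (ind y)) y (mem_ind y)
    obtain ⟨n, hn⟩ := exists_pow_lt_of_lt_one (by positivity : 0 < ε / 3)
      (by norm_num : (1 / 2 : ℝ) < 1)
    exact ⟨n, ind y, mem_iUnion₂.mpr ⟨y, ⟨rfl, (Metric.ball_subset_ball (by linarith)).trans hball⟩,
      Metric.mem_ball_self (by positivity)⟩⟩
  · obtain ⟨c, ⟨rfl, hc⟩, hyc⟩ := mem_iUnion₂.mp hy
    obtain ⟨d, ⟨rfl, hd⟩, hzd⟩ := mem_iUnion₂.mp hz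
    have hsep {c d : Y} (hlt : ind c < ind d) (hc : Metric.ball c (3 * (1 / 2) ^ n) ⊆ U (ind c)) :
        3 * (1 / 2) ^ n ≤ dist c d := by
      by_contra! h
      exact not_lt_ind (hc (by rwa [Metric.mem_ball, dist_comm])) hlt
    have hcd : 3 * (1 / 2) ^ n ≤ dist c d := by
      rcases lt_or_gt_of_ne hij with h | h
      · exact hsep h hc
      · exact dist_comm c d ▸ hsep h hd
    rw [Metric.mem_ball] at hyc hzd
    linarith [dist_triangle4 c y z d, dist_comm c y]

theorem exists_uniformlySeparated_basis :
    ∃ (V : ℕ → Y → Set Y) (ρ : ℕ → ℝ), (∀ n, 0 < ρ n) ∧ (∀ n s, IsOpen (V n s)) ∧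
      (∀ n, UniformlySeparated (ρ n) (V n)) ∧
      ∀ W, IsOpen W → ∀ y ∈ W, ∃ n s, y ∈ V n s ∧ V n s ⊆ W := by
  choose V hVo hVU hVcov hVsep using fun q : ℕ =>
    exists_uniformlySeparated_refinement (U := fun s : Y => Metric.ball s ((1 / 2) ^ q))
      (fun _ => Metric.isOpen_ball) fun y => ⟨y, Metric.mem_ball_self (by positivity)⟩
  refine ⟨fun p => V p.unpair.1 p.unpair.2, fun p => (1 / 2) ^ p.unpair.2, fun p => by positivity,
    fun p s => hVo _ _ _, fun p => hVsep _ _, fun W hW y hy => ?_⟩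
  obtain ⟨ε, hε, hball⟩ := Metric.isOpen_iff.mp hW y hy
  obtain ⟨q, hq⟩ := exists_pow_lt_of_lt_one (half_pos hε) (by norm_num : (1 / 2 : ℝ) < 1)
  obtain ⟨n, s, hys⟩ := hVcov q y
  refine ⟨Nat.pair q n, s, by simpa using hys, fun z hz => hball ?_⟩
  simp only [Nat.unpair_pair] at hz
  have hzs := hVU q n s hz
  have hys' := hVU q n s hys
  rw [Metric.mem_ball] at hzs hys' ⊢
  linarith [dist_triangle_right z y s]

lemma MemB1.memK1 {f : X → Y} (hf : MemB1 f) : MemK1 f := by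
  obtain ⟨g, hg, hlim⟩ := hf
  intro V hV
  let S (m : ℕ) : Set Y := (Metric.thickening (1 / (m + 1)) Vᶜ)ᶜ
  have hS (m : ℕ) : IsClosed (S m) := Metric.isOpen_thickening.isClosed_compl
  have key (x : X) : f x ∈ V ↔ ∃ m, ∀ᶠ n in atTop, g n x ∈ S m := by
    refine ⟨fun hx => ?_, fun ⟨m, hm⟩ => ?_⟩
    · obtain ⟨ε, hε, hball⟩ := Metric.isOpen_iff.mp hV (f x) hx
      obtain ⟨m, hm⟩ := exists_nat_one_div_lt (half_pos hε)
      refine ⟨m, ((hlim x).eventually (Metric.ball_mem_nhds _ (half_pos hε))).mono fun n hn => ?_⟩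
      rintro hmem
      obtain ⟨z, hzV, hz⟩ := Metric.mem_thickening_iff.mp hmem
      refine hzV (hball ?_)
      rw [Metric.mem_ball]
      linarith [dist_triangle z (g n x) (f x), dist_comm z (g n x)]
    · have := (hS m).mem_of_tendsto (hlim x) hm
      exact compl_subset_comm.mp (Metric.self_subset_thickening (by positivity) _) this
  have : f ⁻¹' V = ⋃ m, ⋃ N, ⋂ n, g (N + n) ⁻¹' S m := by
    ext x
    simp only [mem_preimage, key, eventually_atTop_iff_exists_forall_add, mem_iUnion, mem_iInter]
  rw [this]
  exact FunctionallyFSigma.iUnion fun m => ⟨_, fun N => isZeroSet_iInter fun n =>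
    (hS m).isZeroSet_preimage (hg _), rfl⟩

lemma MemB1.memSigmaF {f : X → Y} (hf : MemB1 f) : MemSigmaF f := by
  obtain ⟨g, hg, hlim⟩ := hf
  obtain ⟨V, ρ, hρ, -, hVsep, hbasis⟩ := exists_uniformlySeparated_basis (Y := Y)
  let A (n N : ℕ) (s : Y) : Set X :=
    f ⁻¹' V n s ∩ ⋂ k, g (N + k) ⁻¹' Metric.cthickening (ρ n / 8) (V n s)
  have hA (n N : ℕ) : IsSFDFamily (A n N) := by
    refine ⟨fun s => g N ⁻¹' Metric.thickening (ρ n / 4) (V n s),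
      ((hVsep n).isDiscreteFamily_thickening (hρ n)).preimage (hg N),
      fun s => Metric.isOpen_thickening.isCozeroSet_preimage (hg N), fun s => ?_⟩
    have hAN : A n N s ⊆ g N ⁻¹' Metric.cthickening (ρ n / 8) (V n s) := fun x hx => by
      simpa using mem_iInter.mp hx.2 0
    exact (closure_minimal hAN (Metric.isClosed_cthickening.preimage (hg N))).trans
      (preimage_mono (Metric.cthickening_subset_thickening' (by linarith [hρ n])
        (by linarith [hρ n]) _))
  refine memSigmaF_of_countable (fun p : ℕ × ℕ => range (A p.1 p.2))
    (fun p => (hA p.1 p.2).isSFDSetFamily_range) fun W hW => ?_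
  refine ⟨{B | ∃ n N s, V n s ⊆ W ∧ B = A n N s}, ?_, ?_⟩
  · rintro _ ⟨n, N, s, -, rfl⟩
    exact mem_iUnion.mpr ⟨(n, N), s, rfl⟩
  ext x
  refine ⟨fun hx => ?_, fun ⟨_, ⟨n, N, s, hVW, hB⟩, hx⟩ => hVW (hB ▸ hx).1⟩
  obtain ⟨n, s, hfx, hVW⟩ := hbasis W hW (f x) hx
  obtain ⟨N, hN⟩ := eventually_atTop_iff_exists_forall_add.mp
    ((hlim x).eventually (Metric.closedBall_mem_nhds (f x) (by linarith [hρ n] : 0 < ρ n / 8)))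
  exact ⟨A n N s, ⟨n, N, s, hVW, rfl⟩, hfx,
    mem_iInter.mpr fun k => Metric.mem_cthickening_of_dist_le _ _ _ _ hfx (hN k)⟩

end MetricTarget

section Selection

variable {X β ι : Type*}

def firstSome (a : ℕ → Option β) : ℕ → Option β
  | 0 => none
  | n + 1 => (firstSome a n).or (a n)

lemma firstSome_congr {a b : ℕ → Option β} {n : ℕ} (h : ∀ p < n, a p = b p) :
    firstSome a n = firstSome b n := by
  induction n with
  | zero => rfl
  | succ n ih => simp only [firstSome, ih fun p hp => h p (by omega), h n (by omega)]

lemma firstSome_eq_none {a : ℕ → Option β} {n : ℕ} (h : ∀ p < n, a p = none) :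
    firstSome a n = none := by
  induction n with
  | zero => rfl
  | succ n ih => simp [firstSome, ih fun p hp => h p (by omega), h n (by omega)]

lemma firstSome_eq_some {a : ℕ → Option β} {p n : ℕ} {v : β} (hnone : ∀ q < p, a q = none)
    (hp : a p = some v) (hpn : p < n) : firstSome a n = some v := by
  induction n with
  | zero => omega
  | succ n ih =>
    rcases Nat.lt_succ_iff_lt_or_eq.mp hpn with h | rfl
    · simp [firstSome, ih h]
    · simp [firstSome, firstSome_eq_none hnone, hp]

open Classical in
noncomputable def memberValue (S : ι → Set X) (v : ι → β) (x : X) : Option β :=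
  if h : ∃ i, x ∈ S i then some (v h.choose) else none

lemma memberValue_eq_some {S : ι → Set X} (v : ι → β) {x : X} {i : ι} (hx : x ∈ S i)
    (huniq : ∀ j, x ∈ S j → j = i) : memberValue S v x = some (v i) := by
  have h : ∃ j, x ∈ S j := ⟨i, hx⟩
  rw [memberValue, dif_pos h, huniq _ h.choose_spec]

lemma memberValue_eq_none {S : ι → Set X} (v : ι → β) {x : X} (hx : ∀ i, x ∉ S i) :
    memberValue S v x = none := by
  rw [memberValue, dif_neg (not_exists.mpr hx)]

end Selection

section LocallyConstantApproximation

variable {X β ι : Type*} [TopologicalSpace X]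

lemma IsDiscreteFamily.isLocallyConstant_memberValue {S : ι → Set X} (hS : IsDiscreteFamily S)
    (hc : ∀ i, IsClopen (S i)) (v : ι → β) : IsLocallyConstant (memberValue S v) := by
  rw [IsLocallyConstant.iff_eventually_eq]
  intro x
  by_cases hx : ∃ i, x ∈ S i
  · obtain ⟨i, hi⟩ := hx
    filter_upwards [(hc i).isOpen.mem_nhds hi] with y hy
    rw [memberValue_eq_some v hy fun j hj => hS.eq_of_mem hj hy,
      memberValue_eq_some v hi fun j hj => hS.eq_of_mem hj hi]
  · have hcl : IsClosed (⋃ i, S i) := hS.locallyFinite.isClosed_iUnion fun i => (hc i).isClosed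
    filter_upwards [hcl.isOpen_compl.mem_nhds (by simpa using hx)] with y hy
    rw [memberValue_eq_none v (by simpa using hy), memberValue_eq_none v (by simpa using hx)]

/-- Each approximant `g N` looks, in the order `p = 0, 1, …, N - 1`, for the first family whose
`N`-th clopen approximation `W p i N ⊇ Z p i` contains `x`. Since the `W p i N` shrink to `Z p i`,
for large `N` this is the first family that has a member `Z p i` containing `x`. -/
theorem StronglyZeroDimensional.exists_isLocallyConstant_eventually_eq [Nonempty β]
    (hX : StronglyZeroDimensional X) {Z : ℕ → ι → Set X} (hZ : ∀ p i, IsZeroSet (Z p i))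
    (hsfd : ∀ p, IsSFDFamily (Z p)) (hcov : ∀ x, ∃ p i, x ∈ Z p i) (y : ℕ → ι → β) :
    ∃ g : ℕ → X → β, (∀ N, IsLocallyConstant (g N)) ∧
      ∀ x, ∃ p i, x ∈ Z p i ∧ ∀ᶠ N in atTop, g N x = y p i := by
  classical
  choose U hUdisc hUcoz hZU using hsfd
  replace hZU (p : ℕ) (i : ι) : Z p i ⊆ U p i := subset_closure.trans (hZU p i)
  choose W hWc hZW hWU hWev using fun p i => hX.exists_isClopen_seq (hZ p i) (hUcoz p i) (hZU p i)
  let s (N p : ℕ) : X → Option β := memberValue (fun i => W p i N) (y p)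
  have hs (N p : ℕ) : IsLocallyConstant (s N p) :=
    ((hUdisc p).mono fun i => hWU p i N).isLocallyConstant_memberValue (fun i => hWc p i N) (y p)
  refine ⟨fun N x => (firstSome (fun p => s N p x) N).getD (Classical.arbitrary β),
    fun N => (IsLocallyConstant.iff_eventually_eq _).mpr fun x => ?_, fun x => ?_⟩
  · filter_upwards [(eventually_all_finset (Finset.range N)).mpr fun p _ =>
      (IsLocallyConstant.iff_eventually_eq _).mp (hs N p) x] with x' hx'
    rw [firstSome_congr fun p hp => hx' p (Finset.mem_range.mpr hp)]
  · let p := Nat.find (hcov x)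
    obtain ⟨i, hi⟩ := Nat.find_spec (hcov x)
    refine ⟨p, i, hi, ?_⟩
    have hbefore (q : ℕ) (hq : q < p) : ∀ᶠ N in atTop, s N q x = none := by
      have hxZ (j : ι) : x ∉ Z q j := fun h => Nat.find_min (hcov x) hq ⟨j, h⟩
      by_cases hxU : ∃ j, x ∈ U q j
      · obtain ⟨j, hj⟩ := hxU
        filter_upwards [hWev q j x (hxZ j)] with N hN
        refine memberValue_eq_none _ fun j' hj' => ?_
        obtain rfl := (hUdisc q).eq_of_mem (hWU q j' N hj') hj
        exact hN hj'
      · exact Eventually.of_forall fun N =>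
          memberValue_eq_none _ fun j hj => hxU ⟨j, hWU q j N hj⟩
    have hat (N : ℕ) : s N p x = some (y p i) := memberValue_eq_some _ (hZW p i N hi)
      fun j hj => (hUdisc p).eq_of_mem (hWU p j N hj) (hZU p i hi)
    filter_upwards [(eventually_all_finset (Finset.range p)).mpr fun q hq =>
      hbefore q (Finset.mem_range.mp hq), eventually_gt_atTop p] with N hN hpN
    simp only [firstSome_eq_some (fun q hq => hN q (Finset.mem_range.mpr hq)) (hat N) hpN,
      Option.getD_some]

end LocallyConstantApproximation

section BaireOne

variable {X Y : Type*} [TopologicalSpace X] [PseudoMetricSpace Y]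

open Classical in
noncomputable def coherentLength (a : ℕ → Y) (N : ℕ) : ℕ :=
  Nat.findGreatest (fun k => ∀ j < k, dist (a j) (a (j + 1)) < 2 * (1 / 2) ^ j) N

lemma coherentLength_le (a : ℕ → Y) (N : ℕ) : coherentLength a N ≤ N :=
  Nat.findGreatest_le N

lemma le_coherentLength {a : ℕ → Y} {k N : ℕ} (hkN : k ≤ N)
    (h : ∀ j < k, dist (a j) (a (j + 1)) < 2 * (1 / 2) ^ j) : k ≤ coherentLength a N :=
  Nat.le_findGreatest hkN h

lemma coherentLength_congr {a b : ℕ → Y} {N : ℕ} (h : ∀ j ≤ N, a j = b j) :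
    coherentLength a N = coherentLength b N :=
  Nat.findGreatest_congr fun k hk => forall₂_congr fun j hj => by
    rw [h j (by omega), h (j + 1) (by omega)]

lemma dist_le_of_le_coherentLength {a : ℕ → Y} {k N : ℕ} (hk : k ≤ coherentLength a N) :
    dist (a k) (a (coherentLength a N)) ≤ 4 * (1 / 2) ^ k := by
  have hspec : ∀ j < coherentLength a N, dist (a j) (a (j + 1)) < 2 * (1 / 2) ^ j :=
    Nat.findGreatest_spec (P := fun k => ∀ j < k, dist (a j) (a (j + 1)) < 2 * (1 / 2) ^ j)
      (Nat.zero_le N) (by simp)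
  calc dist (a k) (a (coherentLength a N))
      ≤ ∑ j ∈ Finset.Ico k (coherentLength a N), dist (a j) (a (j + 1)) := dist_le_Ico_sum_dist a hk
    _ ≤ ∑ j ∈ Finset.Ico k (coherentLength a N), 2 * (1 / 2 : ℝ) ^ j :=
        Finset.sum_le_sum fun j hj => (hspec j (Finset.mem_Ico.mp hj).2).le
    _ ≤ 2 * ((1 / 2) ^ k / (1 - 1 / 2)) := by
        rw [← Finset.mul_sum]
        gcongr
        exact geom_sum_Ico_le_of_lt_one (by norm_num) (by norm_num)
    _ = 4 * (1 / 2) ^ k := by ring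

/-- The `N`-th approximant evaluates level `coherentLength` of the levels `0, …, N` at stage `N`.
Once the levels `0, …, k` have stabilised at `x`, that level is at least `k`, and coherence bounds
its distance to level `k`. -/
theorem memB1_of_forall_exists_isLocallyConstant {f : X → Y}
    (h : ∀ k : ℕ, ∃ g : ℕ → X → Y, (∀ N, IsLocallyConstant (g N)) ∧
      ∀ x, ∃ c, (∀ᶠ N in atTop, g N x = c) ∧ dist c (f x) < (1 / 2) ^ k) :
    MemB1 f := by
  choose g hg c hc hcf using h
  refine ⟨fun N x => g (coherentLength (fun j => g j N x) N) N x,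
    fun N => IsLocallyConstant.continuous ((IsLocallyConstant.iff_eventually_eq _).mpr fun x => ?_),
    fun x => Metric.tendsto_atTop.mpr fun ε hε => ?_⟩
  · filter_upwards [(eventually_all_finset (Finset.range (N + 1))).mpr fun j _ =>
      (IsLocallyConstant.iff_eventually_eq _).mp (hg j N) x] with x' hx'
    have hcong (j : ℕ) (hj : j ≤ N) : g j N x' = g j N x := hx' j (Finset.mem_range.mpr (by omega))
    rw [coherentLength_congr hcong]
    exact hcong _ (coherentLength_le _ _)
  obtain ⟨k, hk⟩ := exists_pow_lt_of_lt_one (by positivity : 0 < ε / 5)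
    (by norm_num : (1 / 2 : ℝ) < 1)
  obtain ⟨N₀, hN₀⟩ := eventually_atTop.mp ((eventually_all_finset (Finset.range (k + 1))).mpr
    (fun j _ => hc j x) |>.and (eventually_ge_atTop k))
  refine ⟨N₀, fun N hN => ?_⟩
  obtain ⟨hgc, hkN⟩ := hN₀ N hN
  have hgc' (j : ℕ) (hj : j ≤ k) : g j N x = c j x := hgc j (Finset.mem_range.mpr (by omega))
  have hcoh : k ≤ coherentLength (fun j => g j N x) N := le_coherentLength hkN fun j hj => by
    rw [hgc' j hj.le, hgc' (j + 1) hj]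
    calc dist (c j x) (c (j + 1) x) ≤ dist (c j x) (f x) + dist (c (j + 1) x) (f x) :=
          dist_triangle_right _ _ _
      _ < (1 / 2) ^ j + (1 / 2) ^ (j + 1) := add_lt_add (hcf j x) (hcf (j + 1) x)
      _ ≤ 2 * (1 / 2) ^ j := by rw [pow_succ]; linarith [pow_pos (by norm_num : (0 : ℝ) < 1 / 2) j]
  calc dist (g (coherentLength (fun j => g j N x) N) N x) (f x)
      ≤ dist (g k N x) (g (coherentLength (fun j => g j N x) N) N x) + dist (g k N x) (f x) :=
        dist_triangle_left _ _ _
    _ < 4 * (1 / 2) ^ k + (1 / 2) ^ k :=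
        add_lt_add_of_le_of_lt (dist_le_of_le_coherentLength hcoh) (hgc' k le_rfl ▸ hcf k x)
    _ < ε := by linarith

/-- `Z p B` intersects a zero set from the `K₁`-decomposition of `f ⁻¹' ball (y B) r` with one
from the decomposition of the expansion of the member `B` of the base. -/
theorem exists_zeroSet_cover_of_memK1_of_memSigmaF [Nonempty Y] {f : X → Y} (hK1 : MemK1 f)
    (hSig : MemSigmaF f) {r : ℝ} (hr : 0 < r) :
    ∃ (Z : ℕ → Set X → Set X) (y : Set X → Y), (∀ p B, IsZeroSet (Z p B)) ∧
      (∀ p, IsSFDFamily (Z p)) ∧ (∀ x, ∃ p B, x ∈ Z p B) ∧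
      ∀ p B, ∀ x ∈ Z p B, dist (f x) (y B) < r := by
  classical
  obtain ⟨𝓑, h𝓑, hbase⟩ := hSig
  choose E hEdisc hEcoz hBE using fun m => (h𝓑 m).exists_expansion
  choose V hV hEV using fun m B => (hEcoz m B).functionallyFSigma
  let y (B : Set X) : Y := if h : B.Nonempty then f h.some else Classical.arbitrary Y
  choose F hF hFy using fun B => hK1 (Metric.ball (y B) r) Metric.isOpen_ball
  let e : ℕ ≃ ℕ × ℕ × ℕ := (Denumerable.eqv (ℕ × ℕ × ℕ)).symm
  have hZ (p : ℕ) (B : Set X) : IsZeroSet (F B (e p).2.1 ∩ V (e p).1 B (e p).2.2) :=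
    (hF B _).inter (hV _ B _)
  refine ⟨fun p B => F B (e p).2.1 ∩ V (e p).1 B (e p).2.2, y, hZ,
    fun p => ⟨E (e p).1, hEdisc _, hEcoz _, fun B => ?_⟩, fun x => ?_, fun p B x hx => ?_⟩
  · rw [(hZ p B).isClosed.closure_eq, hEV]
    exact inter_subset_right.trans (subset_iUnion _ _)
  · obtain ⟨𝓢, h𝓢, hpre⟩ := hbase (Metric.ball (f x) (r / 2)) Metric.isOpen_ball
    obtain ⟨B, hB𝓢, hxB⟩ : x ∈ ⋃₀ 𝓢 := hpre ▸ Metric.mem_ball_self (half_pos hr)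
    obtain ⟨m, hBm⟩ := mem_iUnion.mp (h𝓢 hB𝓢)
    have hne : B.Nonempty := ⟨x, hxB⟩
    have hyB : f x ∈ Metric.ball (y B) r := by
      have : hne.some ∈ f ⁻¹' Metric.ball (f x) (r / 2) := by
        rw [hpre]
        exact ⟨B, hB𝓢, hne.some_mem⟩
      rw [mem_preimage, Metric.mem_ball, dist_comm] at this
      simp only [y, dif_pos hne, Metric.mem_ball]
      linarith
    obtain ⟨j, hj⟩ := mem_iUnion.mp (hFy B ▸ hyB : x ∈ ⋃ j, F B j)
    obtain ⟨l, hl⟩ := mem_iUnion.mp (hEV m B ▸ hBE m B hBm hxB)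
    exact ⟨e.symm (m, j, l), B, by simpa using (⟨hj, hl⟩ : x ∈ F B j ∩ V m B l)⟩
  · have : x ∈ f ⁻¹' Metric.ball (y B) r := hFy B ▸ mem_iUnion.mpr ⟨_, hx.1⟩
    exact this

theorem StronglyZeroDimensional.memB1 (hX : StronglyZeroDimensional X) {f : X → Y}
    (hK1 : MemK1 f) (hSig : MemSigmaF f) : MemB1 f := by
  rcases isEmpty_or_nonempty X with hXe | ⟨⟨x₀⟩⟩
  · exact ⟨fun _ => f, fun _ => by fun_prop, isEmptyElim⟩
  have : Nonempty Y := ⟨f x₀⟩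
  refine memB1_of_forall_exists_isLocallyConstant fun k => ?_
  obtain ⟨Z, y, hZ, hsfd, hcov, hy⟩ :=
    exists_zeroSet_cover_of_memK1_of_memSigmaF hK1 hSig (r := (1 / 2) ^ k) (by positivity)
  obtain ⟨g, hg, hgx⟩ := hX.exists_isLocallyConstant_eventually_eq hZ hsfd hcov fun _ => y
  refine ⟨g, hg, fun x => ?_⟩
  obtain ⟨p, B, hx, hev⟩ := hgx x
  exact ⟨y B, hev, dist_comm (f x) (y B) ▸ hy p B x hx⟩

end BaireOne

theorem stmt19 {X Y : Type*} [TopologicalSpace X] [TopologicalSpace Y]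
    [TopologicalSpace.MetrizableSpace Y]
    (hX : (LocallyCompactSpace X ∧ ParacompactSpace X ∧ T2Space X) ∨
      CountablyCompactIn (Set.univ : Set X))
    (hY : ∃ U V : Set Y, IsClopen U ∧ IsClopen V ∧ U.Nonempty ∧ V.Nonempty ∧
      Disjoint U V ∧ U ∪ V = Set.univ) :
    (∀ f : X → Y, (MemK1 f ∧ MemSigmaF f) ↔ MemB1 f) ↔ StronglyZeroDimensional X := by
  let : MetricSpace Y := TopologicalSpace.metrizableSpaceMetric Y
  obtain ⟨U, V, hU, -, ⟨u, hu⟩, ⟨v, hv⟩, hUV, -⟩ := hY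
  refine ⟨fun H => ?_, fun hSZD f => ⟨fun ⟨hK1, hSig⟩ => hSZD.memB1 hK1 hSig,
    fun hf => ⟨hf.memK1, hf.memSigmaF⟩⟩⟩
  have ha : AlmostStronglyZeroDimensional X := almostStronglyZeroDimensional_of_memB1 hU hu
    (hUV.notMem_of_mem_right hv) fun f hK1 hSig => (H f).mp ⟨hK1, hSig⟩
  rcases hX with ⟨_, _, _⟩ | hcc
  · exact ha.stronglyZeroDimensional_of_paracompact
  · have : CountablyCompactSpace X := isCountablyCompact_univ_iff.mp
      (isCountablyCompact_iff_countable_open_cover.mpr hcc)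
    exact ha.stronglyZeroDimensional_of_countablyCompact
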